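/- Let A generate a (2,1)-ROF (sine operator function) R_{2,1} on X satisfying the functional equation 2 R_{2,1}(t) R_{2,1}(s) x = ∫_{t-s}^{t+s} R_{2,1}(τ) x dτ for t ≥ s ≥ 0 and x ∈ X. If ‖R_{2,1}(t)‖ = O(t^{-ε}) as t → ∞ for some 0 < ε < 1, then X = {0}. -/

import Mathlib

open MeasureTheory Set

/-- The Wright function `φ(ρ, μ; z) = ∑ z^k/(k! Γ(ρk+μ))`. -/
noncomputable def wright (ρ : ℝ) (μ : ℂ) (z : ℂ) : ℂ :=
  ∑' k : ℕ, z ^ k / ((k.factorial : ℂ) * Complex.Gamma ((ρ : ℂ) * k + μ))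

/-- Bessel function of the first kind of real order `ν` at a real argument. -/
noncomputable def besselJ (ν : ℝ) (x : ℝ) : ℝ :=
  (x / 2) ^ ν * ∑' k : ℕ, (-1 : ℝ) ^ k * (x / 2) ^ (2 * k) /
    ((k.factorial : ℝ) * Real.Gamma (ν + k + 1))

/-- Mittag-Leffler function. -/
noncomputable def mittagLeffler (a m : ℝ) (z : ℂ) : ℂ :=
  ∑' k : ℕ, z ^ k / Complex.Gamma ((a : ℂ) * k + m)

variable {X : Type*} [NormedAddCommGroup X] [NormedSpace ℂ X]

/-- `R` is the (bounded, everywhere-defined) resolvent `(z - A)⁻¹` of the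
(possibly unbounded) linear operator `A`; i.e. `z ∈ ρ(A)`. -/
structure IsResolventOf (A : X →ₗ.[ℂ] X) (z : ℂ) (R : X →L[ℂ] X) : Prop where
  mem : ∀ x : X, R x ∈ A.domain
  right : ∀ x : X, z • R x - A ⟨R x, mem x⟩ = x
  left : ∀ y : A.domain, R (z • (y : X) - A y) = y

/-- The open sector of half-angle `θ` around the positive real axis. -/
def sect (θ : ℝ) : Set ℂ := {z : ℂ | z ≠ 0 ∧ |Complex.arg z| < θ}

/-- `A` is sectorial of angle `ω`: the spectrum lies in the closed sector of angle `ω`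
(resolvents exist outside) and `‖z(z-A)⁻¹‖` is uniformly bounded outside each bigger
closed sector. -/
def IsSectorial (A : X →ₗ.[ℂ] X) (ω : ℝ) : Prop :=
  (∀ z ∈ (closure (sect ω))ᶜ, ∃ R : X →L[ℂ] X, IsResolventOf A z R) ∧
  ∀ ω' ∈ Set.Ioo ω Real.pi, ∃ M : ℝ,
    ∀ z ∈ (closure (sect ω'))ᶜ, ∀ R : X →L[ℂ] X, IsResolventOf A z R → ‖z‖ * ‖R‖ ≤ M

/-- `B = A⁻¹` as an unbounded operator. -/
def IsInverseOf (B A : X →ₗ.[ℂ] X) : Prop :=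
  (∀ x : A.domain, ∃ h : A x ∈ B.domain, B ⟨A x, h⟩ = (x : X)) ∧
  (∀ y : B.domain, ∃ h : B y ∈ A.domain, A ⟨B y, h⟩ = (y : X))

/-- Riemann–Liouville fractional integral of order `μ > 0`. -/
noncomputable def fracInt (μ : ℝ) (f : ℝ → X) (t : ℝ) : X :=
  ∫ s in Set.Ioo 0 t, ((t - s) ^ (μ - 1) / Real.Gamma μ) • f s

/-- `S` is a `β`-times integrated `α`-resolvent operator function generated by `A`,
with exponential bound `M e^{ω t}`. -/
structure IsROF (A : X →ₗ.[ℂ] X) (α β : ℝ) (S : ℝ → X →L[ℂ] X) (ω M : ℝ) : Prop where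
  cont : ∀ x : X, ContinuousOn (fun t : ℝ => S t x) (Set.Ici 0)
  bound : ∀ t : ℝ, 0 ≤ t → ‖S t‖ ≤ M * Real.exp (ω * t)
  laplace : ∀ l : ℝ, ω < l → ∃ R : X →L[ℂ] X,
    IsResolventOf A ((l ^ α : ℝ) : ℂ) R ∧
    ∀ x : X, ((l ^ (α - β - 1) : ℝ) : ℂ) • R x =
      ∫ t in Set.Ioi (0 : ℝ), Real.exp (-(l * t)) • S t x

/-- `S` is a tempered `β`-times integrated `α`-resolvent operator function generated
by `A`: `‖S t‖ ≤ M t^β` and the Laplace-transform identity holds for all `λ > 0`. -/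
structure IsTemperedROF (A : X →ₗ.[ℂ] X) (α β : ℝ) (S : ℝ → X →L[ℂ] X) (M : ℝ) : Prop where
  cont : ∀ x : X, ContinuousOn (fun t : ℝ => S t x) (Set.Ici 0)
  bound : ∀ t : ℝ, 0 ≤ t → ‖S t‖ ≤ M * t ^ β
  laplace : ∀ l : ℝ, 0 < l → ∃ R : X →L[ℂ] X,
    IsResolventOf A ((l ^ α : ℝ) : ℂ) R ∧
    ∀ x : X, ((l ^ (α - β - 1) : ℝ) : ℂ) • R x =
      ∫ t in Set.Ioi (0 : ℝ), Real.exp (-(l * t)) • S t x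

/-! For `y` in the domain of `A`, the resolvent identity `y = l² L[S y](l) - L[S (A y)](l)`
holds for large `l`; since `S` is bounded, both Laplace transforms are holomorphic on the right
half-plane, so the identity extends to all `l > 0`. The functional equation with `s = t` gives
`∫₀ᵗ S(τ) x dτ = 2 S(t/2)² x`, so the primitive `G` of `S (A y)` is bounded and tends to zero,
and integration by parts gives `L[S (A y)](l) = l L[G](l)`. As `l → 0⁺`, `l L[g](l) → 0` for
every bounded `g` tending to zero (an Abelian theorem); applied to `S y` and to `G` this forces
`y = 0`. Thus `D(A) = 0`, and since the resolvent maps into `D(A)`, `X = 0`. -/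

open Filter Topology

lemma continuousOn_primitive_Ici {f : ℝ → X} (hf : ContinuousOn f (Ici 0)) :
    ContinuousOn (fun t => ∫ τ in (0 : ℝ)..t, f τ) (Ici 0) := fun t ht => by
  have hIcc : Icc 0 (t + 1) = uIcc 0 (t + 1) := (uIcc_of_le (by linarith [mem_Ici.mp ht])).symm
  have hint : IntegrableOn f (uIcc 0 (t + 1)) :=
    (hf.mono (hIcc ▸ Icc_subset_Ici_self)).integrableOn_compact isCompact_uIcc
  refine (intervalIntegral.continuousOn_primitive_interval hint t
    (hIcc ▸ ⟨ht, by linarith⟩)).mono_of_mem_nhdsWithin ?_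
  rw [← hIcc, ← Ici_inter_Iic]
  exact inter_mem_nhdsWithin _ (Iic_mem_nhds (lt_add_one t))

lemma integrableOn_mul_exp_neg_mul {a : ℝ} (ha : 0 < a) :
    IntegrableOn (fun t : ℝ => t * Real.exp (-(a * t))) (Ioi 0) := by
  simpa [Real.rpow_one] using
    integrableOn_rpow_mul_exp_neg_mul_rpow (s := 1) (p := 1) (by norm_num) one_pos ha

noncomputable def laplaceTransform (f : ℝ → X) (z : ℂ) : X :=
  ∫ t in Ioi (0 : ℝ), Complex.exp (-(z * t)) • f t

lemma laplaceTransform_ofReal (f : ℝ → X) (l : ℝ) :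
    laplaceTransform f l = ∫ t in Ioi (0 : ℝ), Real.exp (-(l * t)) • f t := by
  refine integral_congr_ae (Eventually.of_forall fun t => ?_)
  simp only [← Complex.ofReal_mul, ← Complex.ofReal_neg, ← Complex.ofReal_exp, Complex.coe_smul]

lemma norm_cexp_neg_mul_ofReal (z : ℂ) (t : ℝ) :
    ‖Complex.exp (-(z * t))‖ = Real.exp (-(z.re * t)) := by
  simp [Complex.norm_exp]

lemma integrableOn_cexp_neg_mul_smul {f : ℝ → X} {c : ℝ} (hf : ContinuousOn f (Ioi 0))
    (hc : ∀ t, 0 < t → ‖f t‖ ≤ c) {z : ℂ} (hz : 0 < z.re) :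
    IntegrableOn (fun t : ℝ => Complex.exp (-(z * t)) • f t) (Ioi 0) := by
  refine ((exp_neg_integrableOn_Ioi 0 hz).const_mul c).mono' ?_ ?_
  · exact ((by fun_prop : Continuous fun t : ℝ => Complex.exp (-(z * t))).continuousOn.smul
      hf).aestronglyMeasurable measurableSet_Ioi
  · filter_upwards [ae_restrict_mem measurableSet_Ioi] with t ht
    rw [norm_smul, norm_cexp_neg_mul_ofReal, neg_mul, mul_comm c]
    exact mul_le_mul_of_nonneg_left (hc t ht) (Real.exp_pos _).le

lemma differentiableOn_laplaceTransform [CompleteSpace X] {f : ℝ → X} {c : ℝ}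
    (hf : ContinuousOn f (Ioi 0)) (hc : ∀ t, 0 < t → ‖f t‖ ≤ c) :
    DifferentiableOn ℂ (laplaceTransform f) {z | 0 < z.re} := by
  intro z hz
  have ha : 0 < z.re / 2 := half_pos hz
  have hre : ∀ ζ ∈ Metric.ball z (z.re / 2), z.re / 2 < ζ.re := fun ζ hζ => by
    have := (Complex.abs_re_le_norm (ζ - z)).trans_lt (mem_ball_iff_norm.mp hζ)
    rw [Complex.sub_re] at this
    linarith [(abs_lt.mp this).1]
  have hmeas : ∀ g : ℝ → ℂ, Continuous g →
      AEStronglyMeasurable (fun t => g t • f t) (volume.restrict (Ioi 0)) := fun g hg =>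
    (hg.continuousOn.smul hf).aestronglyMeasurable measurableSet_Ioi
  refine (hasDerivAt_integral_of_dominated_loc_of_deriv_le
    (F := fun ζ (t : ℝ) => Complex.exp (-(ζ * t)) • f t)
    (F' := fun ζ (t : ℝ) => (Complex.exp (-(ζ * t)) * -(1 * t)) • f t)
    (bound := fun t => c * (t * Real.exp (-(z.re / 2 * t))))
    (Metric.ball_mem_nhds z ha) (Eventually.of_forall fun ζ => hmeas _ (by fun_prop))
    (integrableOn_cexp_neg_mul_smul hf hc hz) (hmeas _ (by fun_prop)) ?_
    ((integrableOn_mul_exp_neg_mul ha).const_mul c) ?_).2.differentiableAt.differentiableWithinAt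
  · filter_upwards [ae_restrict_mem measurableSet_Ioi] with t (ht : 0 < t) ζ hζ
    rw [norm_smul, norm_mul, norm_cexp_neg_mul_ofReal, one_mul, norm_neg, Complex.norm_real,
      Real.norm_of_nonneg ht.le, mul_comm c]
    refine mul_le_mul ?_ (hc t ht) (norm_nonneg _) (by positivity)
    rw [mul_comm]
    gcongr
    exact (hre ζ hζ).le
  · exact Eventually.of_forall fun t ζ _ =>
      (((hasDerivAt_id ζ).mul_const (t : ℂ)).neg.cexp).smul_const (f t)

lemma laplaceTransform_eq_smul_laplaceTransform_primitive [CompleteSpace X] {f : ℝ → X}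
    {c c' : ℝ} (hf : ContinuousOn f (Ici 0)) (hc : ∀ t, 0 < t → ‖f t‖ ≤ c)
    (hc' : ∀ t, 0 < t → ‖∫ τ in (0 : ℝ)..t, f τ‖ ≤ c') {z : ℂ} (hz : 0 < z.re) :
    laplaceTransform f z = z • laplaceTransform (fun t => ∫ τ in (0 : ℝ)..t, f τ) z := by
  set F := fun t => ∫ τ in (0 : ℝ)..t, f τ
  have hFderiv : ∀ t, 0 < t → HasDerivAt F (f t) t := fun t ht =>
    intervalIntegral.integral_hasDerivAt_right
      (hf.mono (by rw [uIcc_of_le ht.le]; exact Icc_subset_Ici_self)).intervalIntegrable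
      ((hf.mono Ioi_subset_Ici_self).stronglyMeasurableAtFilter isOpen_Ioi t ht)
      (hf.continuousAt (Ici_mem_nhds ht))
  have hFcont := continuousOn_primitive_Ici hf
  have hderiv : ∀ t ∈ Ioi (0 : ℝ), HasDerivAt (fun u : ℝ => Complex.exp (-(z * u)) • F u)
      (Complex.exp (-(z * t)) • f t + (-z) • (Complex.exp (-(z * t)) • F t)) t := fun t ht => by
    have := ((((hasDerivAt_id t).ofReal_comp).const_mul z).neg.cexp).smul (hFderiv t ht)
    simp only [Pi.neg_apply, id_eq, Complex.ofReal_one, mul_one] at this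
    rwa [mul_comm (Complex.exp _), ← smul_smul] at this
  have hlim : Tendsto (fun u : ℝ => Complex.exp (-(z * u)) • F u) atTop (𝓝 0) := by
    refine squeeze_zero_norm' (a := fun u => c' * Real.exp (-(z.re * u))) ?_ ?_
    · filter_upwards [eventually_gt_atTop 0] with u hu
      rw [norm_smul, norm_cexp_neg_mul_ofReal, mul_comm]
      exact mul_le_mul_of_nonneg_right (hc' u hu) (Real.exp_pos _).le
    · simpa using (Real.tendsto_exp_neg_atTop_nhds_zero.comp
        (tendsto_id.const_mul_atTop hz)).const_mul c'
  have hf_int := integrableOn_cexp_neg_mul_smul (hf.mono Ioi_subset_Ici_self) hc hz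
  have hF_int : IntegrableOn (fun t : ℝ => (-z) • (Complex.exp (-(z * t)) • F t)) (Ioi 0) :=
    (integrableOn_cexp_neg_mul_smul (hFcont.mono Ioi_subset_Ici_self) hc' hz).smul (-z)
  have hFTC := integral_Ioi_of_hasDerivAt_of_tendsto
    ((by fun_prop : Continuous fun u : ℝ => Complex.exp (-(z * u))).continuousWithinAt.smul
      (hFcont 0 self_mem_Ici)) hderiv (hf_int.add hF_int) hlim
  rw [integral_add hf_int hF_int, integral_smul] at hFTC
  simp only [Pi.smul_apply', intervalIntegral.integral_same, F, smul_zero, sub_zero, neg_smul,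
    add_neg_eq_zero] at hFTC
  exact hFTC

lemma tendsto_ofReal_smul_laplaceTransform_nhdsGT_zero {g : ℝ → X} {c : ℝ}
    (hg : ContinuousOn g (Ioi 0)) (hc : ∀ t, 0 < t → ‖g t‖ ≤ c)
    (hlim : Tendsto g atTop (𝓝 0)) :
    Tendsto (fun l : ℝ => (l : ℂ) • laplaceTransform g l) (𝓝[>] 0) (𝓝 0) := by
  -- substituting `u = l t` turns `l ∫ e^{-lt} g t dt` into `∫ e^{-u} g (u / l) du`
  have hsubst : ∀ l : ℝ, 0 < l → (l : ℂ) • laplaceTransform g l =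
      ∫ u in Ioi (0 : ℝ), Real.exp (-u) • g (u / l) := fun l hl => by
    have := integral_comp_mul_left_Ioi' (fun u => Real.exp (-u) • g (u / l)) 0 hl
    simp only [mul_zero, mul_div_cancel_left₀ _ hl.ne'] at this
    rw [laplaceTransform_ofReal, Complex.coe_smul, ← this]
  have hlim0 : Tendsto (fun l : ℝ => ∫ u in Ioi (0 : ℝ), Real.exp (-u) • g (u / l))
      (𝓝[>] 0) (𝓝 (∫ u in Ioi (0 : ℝ), (0 : X))) := by
    refine tendsto_integral_filter_of_dominated_convergence (fun u => c * Real.exp (-u)) ?_ ?_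
      ?_ ?_
    · filter_upwards [self_mem_nhdsWithin] with l (hl : 0 < l)
      refine (Real.continuous_exp.comp continuous_neg).continuousOn.smul (hg.comp
        (continuousOn_id.div_const l) fun u (hu : 0 < u) => div_pos hu hl)
        |>.aestronglyMeasurable measurableSet_Ioi
    · filter_upwards [self_mem_nhdsWithin] with l (hl : 0 < l)
      filter_upwards [ae_restrict_mem measurableSet_Ioi] with u (hu : 0 < u)
      rw [norm_smul, Real.norm_of_nonneg (Real.exp_pos _).le, mul_comm c]
      exact mul_le_mul_of_nonneg_left (hc _ (div_pos hu hl)) (Real.exp_pos _).le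
    · simpa using (exp_neg_integrableOn_Ioi 0 one_pos).const_mul c
    · filter_upwards [ae_restrict_mem measurableSet_Ioi] with u (hu : 0 < u)
      have : Tendsto (fun l : ℝ => u / l) (𝓝[>] 0) atTop := by
        simpa only [div_eq_mul_inv] using tendsto_inv_nhdsGT_zero.const_mul_atTop hu
      simpa using (hlim.comp this).const_smul (Real.exp (-u))
  rw [integral_zero] at hlim0
  exact hlim0.congr' (eventually_nhdsWithin_of_forall fun l hl => (hsubst l hl).symm)

lemma DifferentiableOn.eqOn_zero_of_eventually_atTop_ofReal [CompleteSpace X] {F : ℂ → X}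
    (hF : DifferentiableOn ℂ F {z | 0 < z.re}) (h : ∀ᶠ l : ℝ in atTop, F l = 0) :
    EqOn F 0 {z | 0 < z.re} := by
  obtain ⟨l₀, hl₀⟩ := eventually_atTop.mp h
  set r := max l₀ 0 + 1
  have hr : l₀ < r := by simp only [r]; linarith [le_max_left l₀ 0]
  have hofReal : Tendsto ((↑) : ℝ → ℂ) (𝓝[≠] r) (𝓝[≠] (r : ℂ)) :=
    Complex.continuous_ofReal.continuousWithinAt.tendsto_nhdsWithin fun l hl =>
      mt Complex.ofReal_inj.mp hl
  have hF' := hF.analyticOnNhd (isOpen_lt continuous_const Complex.continuous_re)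
  refine hF'.eqOn_zero_of_preconnected_of_frequently_eq_zero
    (convex_halfSpace_re_gt 0).isPreconnected
    (show 0 < (r : ℂ).re by rw [Complex.ofReal_re]; positivity)
    (hofReal.frequently (Eventually.frequently ?_))
  filter_upwards [nhdsWithin_le_nhds (lt_mem_nhds hr)] with l hl using hl₀ l hl.le

lemma IsResolventOf.eq_zero_of_apply_eq_zero {A : X →ₗ.[ℂ] X} {z : ℂ} {R : X →L[ℂ] X}
    (hR : IsResolventOf A z R) {x : X} (hx : R x = 0) : x = 0 := by
  have h0 : (⟨R x, hR.mem x⟩ : A.domain) = 0 := Subtype.ext hx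
  have h := hR.right x
  rw [h0, hx] at h
  simpa using h.symm

lemma exists_norm_le_of_exp_bound_of_decay {S : ℝ → X →L[ℂ] X} {ω M ε C : ℝ}
    (hexp : ∀ t, 0 ≤ t → ‖S t‖ ≤ M * Real.exp (ω * t)) (hε : 0 ≤ ε)
    (hdecay : ∀ t, 1 ≤ t → ‖S t‖ ≤ C * t ^ (-ε)) :
    ∃ K, ∀ t, 0 ≤ t → ‖S t‖ ≤ K := by
  have hC : 0 ≤ C := by simpa using (norm_nonneg _).trans (hdecay 1 le_rfl)
  refine ⟨max (M * Real.exp |ω|) C, fun t ht => ?_⟩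
  rcases le_total t 1 with ht1 | ht1
  · have hM : 0 ≤ M := by simpa using (norm_nonneg _).trans (hexp 0 le_rfl)
    refine (hexp t ht).trans (le_max_of_le_left ?_)
    gcongr
    calc ω * t ≤ |ω| * t := by gcongr; exact le_abs_self ω
      _ ≤ |ω| := mul_le_of_le_one_right (abs_nonneg ω) ht1
  · refine (hdecay t ht1).trans (le_max_of_le_right ?_)
    exact mul_le_of_le_one_right hC (Real.rpow_le_one_of_one_le_of_nonpos ht1 (by linarith))

lemma tendsto_apply_atTop_zero_of_decay {S : ℝ → X →L[ℂ] X} {ε C : ℝ} (hε : 0 < ε)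
    (hdecay : ∀ t, 1 ≤ t → ‖S t‖ ≤ C * t ^ (-ε)) (x : X) :
    Tendsto (S · x) atTop (𝓝 0) := by
  refine squeeze_zero_norm' (a := fun t => C * t ^ (-ε) * ‖x‖) ?_ ?_
  · filter_upwards [eventually_ge_atTop 1] with t ht
    exact ((S t).le_opNorm x).trans (mul_le_mul_of_nonneg_right (hdecay t ht) (norm_nonneg x))
  · simpa using ((tendsto_rpow_neg_atTop hε).const_mul C).mul_const ‖x‖

section SineFunction

variable {A : X →ₗ.[ℂ] X} {S : ℝ → X →L[ℂ] X} {ω M K : ℝ}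

lemma IsROF.exists_resolvent_eq_laplaceTransform (hS : IsROF A 2 1 S ω M) {l : ℝ}
    (hl : ω < l) :
    ∃ R : X →L[ℂ] X, IsResolventOf A ((l : ℂ) ^ 2) R ∧ ∀ x, R x = laplaceTransform (S · x) l := by
  obtain ⟨R, hR, hRL⟩ := hS.laplace l hl
  refine ⟨R, by rwa [Real.rpow_two, Complex.ofReal_pow] at hR, fun x => ?_⟩
  rw [laplaceTransform_ofReal, ← hRL x]
  norm_num

lemma IsROF.sq_smul_laplaceTransform_sub_laplaceTransform (hS : IsROF A 2 1 S ω M)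
    (y : A.domain) {l : ℝ} (hl : ω < l) :
    (l : ℂ) ^ 2 • laplaceTransform (S · y) l - laplaceTransform (S · (A y)) l = y := by
  obtain ⟨R, hR, hRL⟩ := hS.exists_resolvent_eq_laplaceTransform hl
  have h := hR.left y
  rwa [map_sub, map_smul, hRL, hRL] at h

variable (hK : ∀ t, 0 ≤ t → ‖S t‖ ≤ K)
  (hG : ∀ t, 0 ≤ t → ∀ x, ∫ τ in (0 : ℝ)..t, S τ x = (2 : ℝ) • S (t / 2) (S (t / 2) x))
include hK hG

lemma norm_primitive_le {t : ℝ} (ht : 0 ≤ t) (x : X) :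
    ‖∫ τ in (0 : ℝ)..t, S τ x‖ ≤ 2 * K * (K * ‖x‖) := by
  have hK' : ‖S (t / 2)‖ ≤ K := hK _ (by positivity)
  rw [hG t ht, norm_smul, Real.norm_two, mul_assoc]
  gcongr
  refine ((S _).le_opNorm _).trans (mul_le_mul hK' ?_ (norm_nonneg _) ((norm_nonneg _).trans hK'))
  exact ((S _).le_opNorm _).trans (mul_le_mul_of_nonneg_right hK' (norm_nonneg _))

lemma tendsto_primitive_atTop (hlim : ∀ x, Tendsto (S · x) atTop (𝓝 0)) (x : X) :
    Tendsto (fun t => ∫ τ in (0 : ℝ)..t, S τ x) atTop (𝓝 0) := by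
  refine squeeze_zero_norm' (a := fun t => 2 * K * ‖S (t / 2) x‖) ?_ ?_
  · filter_upwards [eventually_ge_atTop 0] with t ht
    rw [hG t ht, norm_smul, Real.norm_two, mul_assoc]
    gcongr
    exact ((S _).le_opNorm _).trans (mul_le_mul_of_nonneg_right (hK _ (by positivity))
      (norm_nonneg _))
  · simpa using ((hlim x).comp (tendsto_id.atTop_div_const two_pos)).norm.const_mul (2 * K)

theorem IsROF.domain_eq_zero [CompleteSpace X] (hS : IsROF A 2 1 S ω M)
    (hlim : ∀ x, Tendsto (S · x) atTop (𝓝 0)) (y : A.domain) : (y : X) = 0 := by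
  have hcont : ∀ x, ContinuousOn (S · x) (Ioi 0) := fun x => (hS.cont x).mono Ioi_subset_Ici_self
  have hbdd : ∀ x t, 0 < t → ‖S t x‖ ≤ K * ‖x‖ := fun x t ht =>
    ((S t).le_opNorm x).trans (mul_le_mul_of_nonneg_right (hK t ht.le) (norm_nonneg x))
  have hG_bdd : ∀ x t, 0 < t → ‖∫ τ in (0 : ℝ)..t, S τ x‖ ≤ 2 * K * (K * ‖x‖) := fun x t ht =>
    norm_primitive_le hK hG ht.le x
  have hL : ∀ x, DifferentiableOn ℂ (laplaceTransform (S · x)) {z | 0 < z.re} := fun x =>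
    differentiableOn_laplaceTransform (hcont x) (hbdd x)
  have hΦ : EqOn (fun z : ℂ => z ^ 2 • laplaceTransform (S · y) z
      - laplaceTransform (S · (A y)) z - y) 0 {z | 0 < z.re} := by
    refine DifferentiableOn.eqOn_zero_of_eventually_atTop_ofReal ?_ ?_
    · exact (((differentiable_pow 2).differentiableOn.smul (hL y)).sub (hL (A y))).sub_const _
    · filter_upwards [eventually_gt_atTop ω] with l hl
      simp [hS.sq_smul_laplaceTransform_sub_laplaceTransform y hl]
  have hy : ∀ᶠ l : ℝ in 𝓝[>] 0, (l : ℂ) • ((l : ℂ) • laplaceTransform (S · y) l)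
      - (l : ℂ) • laplaceTransform (fun t => ∫ τ in (0 : ℝ)..t, S τ (A y)) l = y := by
    filter_upwards [self_mem_nhdsWithin] with l (hl : 0 < l)
    have hl' : 0 < (l : ℂ).re := by rwa [Complex.ofReal_re]
    have h := hΦ hl'
    dsimp only [Pi.zero_apply] at h
    rw [laplaceTransform_eq_smul_laplaceTransform_primitive (hS.cont (A y)) (hbdd _) (hG_bdd _)
      hl', sq, mul_smul, sub_eq_zero] at h
    exact h
  have hl : Tendsto (fun l : ℝ => (l : ℂ)) (𝓝[>] 0) (𝓝 0) :=
    (Complex.continuous_ofReal.tendsto' 0 0 Complex.ofReal_zero).mono_left nhdsWithin_le_nhds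
  have hSy := tendsto_ofReal_smul_laplaceTransform_nhdsGT_zero (hcont y) (hbdd y) (hlim y)
  have hGAy := tendsto_ofReal_smul_laplaceTransform_nhdsGT_zero
    ((continuousOn_primitive_Ici (hS.cont (A y))).mono Ioi_subset_Ici_self) (hG_bdd _)
    (tendsto_primitive_atTop hK hG hlim _)
  simpa using (tendsto_nhds_unique (((hl.smul hSy).sub hGAy).congr' hy) tendsto_const_nhds).symm

end SineFunction

theorem stmt12_general {X : Type*} [NormedAddCommGroup X] [NormedSpace ℂ X]
    (A : X →ₗ.[ℂ] X) (S : ℝ → X →L[ℂ] X) (omega M : ℝ) (hS : IsROF A 2 1 S omega M)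
    (hfe : ∀ t s : ℝ, 0 ≤ s → s ≤ t → ∀ x : X,
      (2 : ℝ) • S t (S s x) = ∫ τ in (t - s)..(t + s), S τ x)
    (eps C : ℝ) (heps0 : 0 < eps)
    (hdecay : ∀ t : ℝ, 1 ≤ t → ‖S t‖ ≤ C * t ^ (-eps)) :
    ∀ x : X, x = 0 := by
  intro x
  obtain ⟨R, hR, hRL⟩ := hS.exists_resolvent_eq_laplaceTransform (lt_add_one omega)
  refine hR.eq_zero_of_apply_eq_zero ?_
  by_cases hX : CompleteSpace X
  · obtain ⟨K, hK⟩ := exists_norm_le_of_exp_bound_of_decay hS.bound heps0.le hdecay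
    have hprimitive : ∀ t, 0 ≤ t → ∀ z : X,
        ∫ τ in (0 : ℝ)..t, S τ z = (2 : ℝ) • S (t / 2) (S (t / 2) z) := fun t ht z => by
      simpa only [sub_self, add_halves, eq_comm] using hfe (t / 2) (t / 2) (by positivity) le_rfl z
    exact hS.domain_eq_zero hK hprimitive (tendsto_apply_atTop_zero_of_decay heps0 hdecay)
      ⟨R x, hR.mem x⟩
  -- without completeness the Bochner integral defining `R x` is zero by convention
  · rw [hRL, laplaceTransform, integral_of_not_completeSpace hX]

theorem stmt12 {X : Type*} [NormedAddCommGroup X] [NormedSpace ℂ X]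
    (A : X →ₗ.[ℂ] X) (S : ℝ → X →L[ℂ] X) (omega M : ℝ) (hS : IsROF A 2 1 S omega M)
    (hfe : ∀ t s : ℝ, 0 ≤ s → s ≤ t → ∀ x : X,
      (2 : ℝ) • S t (S s x) = ∫ τ in (t - s)..(t + s), S τ x)
    (eps C : ℝ) (heps0 : 0 < eps) (heps1 : eps < 1)
    (hdecay : ∀ t : ℝ, 1 ≤ t → ‖S t‖ ≤ C * t ^ (-eps)) :
    ∀ x : X, x = 0 :=
  stmt12_general A S omega M hS hfe eps C heps0 hdecay
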